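/- For every p ∈ (0,1), every integer j ≥ 0, and all integers i, ĩ ≥ max(n-2, 0) for some n ≥ 2, the quantity f(i,j) := λ_PF^{j-1}·(λ_PF - a^{i+j+1}λ_r)/(λ_PF + p - a^{i+2}(λ_r + p)) satisfies f(i,j) ≤ λ_PF^{j-1}/(1+p), and |f(i,j) - f(ĩ,j)| ≤ |a|^n · λ_PF^{j+1}/(1-p). -/

import Mathlib

open Real Set

noncomputable def lamR (p : ℝ) : ℝ := (1 - p - Real.sqrt ((1 - p) * (3 * p + 1))) / 2
noncomputable def lamPF (p : ℝ) : ℝ := (1 - p + Real.sqrt ((1 - p) * (3 * p + 1))) / 2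
noncomputable def evRatio (p : ℝ) : ℝ := lamR p / lamPF p

noncomputable def fWeight (p : ℝ) (i j : ℤ) : ℝ :=
  lamPF p ^ (j - 1) * (lamPF p - evRatio p ^ (i + j + 1) * lamR p) /
    (lamPF p + p - evRatio p ^ (i + 2) * (lamR p + p))

private lemma abs_zpow'' (a : ℝ) (k : ℤ) : |a ^ k| = |a| ^ k := by
  rcases k with m | m
  · simp [abs_pow]
  · simp [zpow_negSucc, abs_pow, abs_inv]

set_option maxHeartbeats 1000000 in
theorem fWeight_bounds (p : ℝ) (hp : p ∈ Ioo (0 : ℝ) 1) (n : ℕ) (hn : 2 ≤ n)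
    (i i' j : ℤ) (hj : 0 ≤ j) (hi : (n : ℤ) - 2 ≤ i) (hi' : (n : ℤ) - 2 ≤ i') :
    fWeight p i j ≤ lamPF p ^ (j - 1) / (1 + p) ∧
    |fWeight p i j - fWeight p i' j| ≤ |evRatio p| ^ n * lamPF p ^ (j + 1) / (1 - p) := by
  obtain ⟨hp0, hp1⟩ := hp
  simp only [fWeight]
  set s := Real.sqrt ((1 - p) * (3 * p + 1)) with hs_def
  have hprod_nn : (0:ℝ) ≤ (1 - p) * (3 * p + 1) := by nlinarith
  have hp2 : (0:ℝ) < 1 - p ^ 2 := by nlinarith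
  have hs2 : s ^ 2 = (1 - p) * (3 * p + 1) := Real.sq_sqrt hprod_nn
  have hs_pos : 0 < s := Real.sqrt_pos.mpr (by nlinarith)
  have hs_gt : 1 - p < s := by nlinarith [hs2, hs_pos]
  have hs_lt : s < 1 + p := by nlinarith [hs2, hs_pos]
  set L := lamPF p with hL_def
  set R := lamR p with hR_def
  set a := evRatio p with ha_def
  have hL : L = (1 - p + s) / 2 := by rw [hL_def]; unfold lamPF; rw [← hs_def]
  have hR : R = (1 - p - s) / 2 := by rw [hR_def]; unfold lamR; rw [← hs_def]
  have hLpos : 0 < L := by rw [hL]; linarith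
  have hL1 : L < 1 := by rw [hL]; linarith
  have hRneg : R < 0 := by rw [hR]; linarith
  have hRp : 0 < R + p := by rw [hR]; linarith
  have hLp1 : 1 ≤ L + p := by rw [hL]; linarith
  have hLppos : (0:ℝ) < L + p := by linarith
  have hLne : L ≠ 0 := ne_of_gt hLpos
  have ha : a = R / L := by rw [ha_def]; unfold evRatio; rw [← hR_def, ← hL_def]
  have haR : R = a * L := by rw [ha]; field_simp
  have ha_neg : a < 0 := by
    rw [ha]; exact div_neg_of_neg_of_pos hRneg hLpos
  have hane : a ≠ 0 := ne_of_lt ha_neg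
  have ha_gt : -1 < a := by
    rw [ha, lt_div_iff₀ hLpos]
    have : L + R = 1 - p := by rw [hL, hR]; ring
    nlinarith
  set b := |a| with hb_def
  have hb_eq : b = -a := abs_of_neg ha_neg
  have hb_pos : 0 < b := abs_pos.mpr hane
  have hb1 : b < 1 := by rw [hb_eq]; linarith
  have hbmono : ∀ t k : ℤ, t ≤ k → b ^ k ≤ b ^ t := fun t k h =>
    zpow_le_zpow_right_of_le_one₀ hb_pos hb1.le h
  have hb2 : b ^ (2:ℤ) = a ^ 2 := by
    rw [(by norm_num : (2:ℤ) = ((2:ℕ):ℤ)), zpow_natCast, hb_def, sq_abs]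
  have habsk : ∀ k : ℤ, |a ^ k| = b ^ k := fun k => abs_zpow'' a k
  have hzle : ∀ K : ℤ, 2 ≤ K → a ^ K ≤ a ^ 2 := by
    intro K hK
    calc a ^ K ≤ |a ^ K| := le_abs_self _
      _ = b ^ K := habsk K
      _ ≤ b ^ (2:ℤ) := hbmono 2 K hK
      _ = a ^ 2 := hb2
  -- algebraic identities
  have I1' : L ^ 2 * (L + p) - R ^ 2 * (R + p) = s * (1 - p ^ 2) := by
    rw [hL, hR]; linear_combination (s / 4) * hs2
  have I2 : R ^ 2 * (1 - R) = L ^ 2 * (1 - L) := by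
    rw [hL, hR]; linear_combination (s / 4) * hs2
  have hsq : R ^ 2 = a ^ 2 * L ^ 2 := by rw [haR]; ring
  have I1 : L ^ 2 * (L + p - a ^ 2 * (R + p)) = s * (1 - p ^ 2) := by
    linear_combination I1' + (R + p) * hsq
  have hkey : a ^ 2 * (1 - R) = 1 - L := by
    apply mul_left_cancel₀ (pow_ne_zero 2 hLne)
    linear_combination I2 - (1 - R) * hsq
  have hD0pos : 0 < L + p - a ^ 2 * (R + p) := by
    nlinarith [I1, mul_pos hLpos hLpos, mul_pos hs_pos hp2]
  constructor
  · -- Part 1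
    have hx : a ^ (i + 2) ≤ a ^ 2 := hzle _ (by omega)
    have hy : a ^ (i + j + 1) ≤ a ^ 2 := by
      rcases (by omega : i + j + 1 = 1 ∨ 2 ≤ i + j + 1) with h | h
      · rw [h, zpow_one]
        calc a ≤ 0 := ha_neg.le
          _ ≤ a ^ 2 := sq_nonneg a
      · exact hzle _ h
    have hDpos1 : 0 < L + p - a ^ (i + 2) * (R + p) := by
      have := mul_le_mul_of_nonneg_right hx hRp.le
      linarith
    rw [div_le_div_iff₀ hDpos1 (by linarith : (0:ℝ) < 1 + p)]
    have hLj : (0:ℝ) < L ^ (j - 1) := zpow_pos hLpos _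
    have main : (L - a ^ (i + j + 1) * R) * (1 + p) ≤ L + p - a ^ (i + 2) * (R + p) := by
      have h2' : (1 + p) * (a ^ (i + j + 1) * (-R)) ≤ (1 + p) * (a ^ 2 * (-R)) :=
        mul_le_mul_of_nonneg_left (mul_le_mul_of_nonneg_right hy (by linarith)) (by linarith)
      have h1 : a ^ (i + 2) * (R + p) ≤ a ^ 2 * (R + p) := mul_le_mul_of_nonneg_right hx hRp.le
      have hkeyp : p * (a ^ 2 * (1 - R)) = p * (1 - L) := by rw [hkey]
      linarith [h2', h1, hkeyp]
    calc L ^ (j - 1) * (L - a ^ (i + j + 1) * R) * (1 + p)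
        = L ^ (j - 1) * ((L - a ^ (i + j + 1) * R) * (1 + p)) := by ring
      _ ≤ L ^ (j - 1) * (L + p - a ^ (i + 2) * (R + p)) :=
          mul_le_mul_of_nonneg_left main hLj.le
  · -- Part 2
    have pack : ∃ u v : ℝ, (u - v = b ^ (n:ℤ) + b ^ ((n:ℤ) + 1)) ∧ v ≤ 0 ∧ u ≤ a ^ 2 ∧
        ∀ k : ℤ, (n:ℤ) ≤ k → v ≤ a ^ k ∧ a ^ k ≤ u := by
      rcases Nat.even_or_odd n with he | ho
      · refine ⟨b ^ (n:ℤ), -(b ^ ((n:ℤ) + 1)), by ring,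
          neg_nonpos.mpr (zpow_pos hb_pos _).le, ?_, ?_⟩
        · calc b ^ (n:ℤ) ≤ b ^ (2:ℤ) := hbmono _ _ (by exact_mod_cast hn)
            _ = a ^ 2 := hb2
        · intro k hk
          constructor
          · rcases le_or_gt 0 (a ^ k) with h | h
            · have := zpow_pos hb_pos ((n:ℤ) + 1)
              linarith
            · have hodd : Odd k := by
                rcases Int.even_or_odd k with hk2 | hk2
                · exact absurd (hk2.zpow_pos hane) (not_lt.mpr h.le)
                · exact hk2
              have hEn : Even (n:ℤ) := (Int.even_coe_nat n).mpr he
              have hnk : (n:ℤ) + 1 ≤ k := by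
                rcases hodd with ⟨m, hm⟩; rcases hEn with ⟨l, hl⟩; omega
              have h3 : |a ^ k| ≤ b ^ ((n:ℤ) + 1) := by
                rw [habsk]; exact hbmono _ _ hnk
              linarith [neg_abs_le (a ^ k)]
          · calc a ^ k ≤ |a ^ k| := le_abs_self _
              _ = b ^ k := habsk k
              _ ≤ b ^ (n:ℤ) := hbmono _ _ hk
      · refine ⟨b ^ ((n:ℤ) + 1), -(b ^ (n:ℤ)), by ring,
          neg_nonpos.mpr (zpow_pos hb_pos _).le, ?_, ?_⟩
        · calc b ^ ((n:ℤ) + 1) ≤ b ^ (2:ℤ) := hbmono _ _ (by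
              have : (2:ℤ) ≤ (n:ℤ) := by exact_mod_cast hn
              omega)
            _ = a ^ 2 := hb2
        · intro k hk
          constructor
          · have h3 : |a ^ k| ≤ b ^ (n:ℤ) := by rw [habsk]; exact hbmono _ _ hk
            linarith [neg_abs_le (a ^ k)]
          · rcases le_or_gt (a ^ k) 0 with h | h
            · exact h.trans (zpow_pos hb_pos _).le
            · have heven : Even k := by
                rcases Int.even_or_odd k with hk2 | hk2
                · exact hk2
                · exact absurd (hk2.zpow_neg ha_neg) (not_lt.mpr h.le)
              have hOn : Odd (n:ℤ) := (Int.odd_coe_nat n).mpr ho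
              have hnk : (n:ℤ) + 1 ≤ k := by
                rcases heven with ⟨m, hm⟩; rcases hOn with ⟨l, hl⟩; omega
              calc a ^ k ≤ |a ^ k| := le_abs_self _
                _ = b ^ k := habsk k
                _ ≤ b ^ ((n:ℤ) + 1) := hbmono _ _ hnk
    obtain ⟨u, v, huv, hv0, hua, hbound⟩ := pack
    have hxb := hbound (i + 2) (by omega)
    have hx'b := hbound (i' + 2) (by omega)
    set x := a ^ (i + 2) with hx_def
    set x' := a ^ (i' + 2) with hx'_def
    set w := a ^ j with hw_def
    -- denominators
    have hDuD0 : L + p - a ^ 2 * (R + p) ≤ L + p - u * (R + p) := by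
      have h := mul_le_mul_of_nonneg_right hua hRp.le
      linarith only [h]
    have hDup : 0 < L + p - u * (R + p) := lt_of_lt_of_le hD0pos hDuD0
    have hDvge : L + p ≤ L + p - v * (R + p) := by
      linarith only [mul_nonneg (neg_nonneg.mpr hv0) hRp.le]
    have hDvp : 0 < L + p - v * (R + p) := lt_of_lt_of_le hLppos hDvge
    have hDuleD : L + p - u * (R + p) ≤ L + p - x * (R + p) := by
      have h := mul_le_mul_of_nonneg_right hxb.2 hRp.le
      linarith only [h]
    have hDleDv : L + p - x * (R + p) ≤ L + p - v * (R + p) := by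
      have h := mul_le_mul_of_nonneg_right hxb.1 hRp.le
      linarith only [h]
    have hDuleD' : L + p - u * (R + p) ≤ L + p - x' * (R + p) := by
      have h := mul_le_mul_of_nonneg_right hx'b.2 hRp.le
      linarith only [h]
    have hD'leDv : L + p - x' * (R + p) ≤ L + p - v * (R + p) := by
      have h := mul_le_mul_of_nonneg_right hx'b.1 hRp.le
      linarith only [h]
    have hDpos : 0 < L + p - x * (R + p) := lt_of_lt_of_le hDup hDuleD
    have hD'pos : 0 < L + p - x' * (R + p) := lt_of_lt_of_le hDup hDuleD'
    -- rewrite fWeight values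
    have hLjj : L ^ (j - 1) * L = L ^ j := by
      rw [← zpow_add_one₀ hLne (j - 1)]; congr 1; omega
    have hnum_i : ∀ k : ℤ, a ^ (k + j + 1) * R = a ^ (k + 2) * w * L := by
      intro k
      have e : a ^ (k + j + 1) * a = a ^ (k + 2) * a ^ j := by
        rw [← zpow_add_one₀ hane (k + j + 1), ← zpow_add₀ hane (k + 2) j]
        congr 1; ring
      rw [hw_def]
      linear_combination a ^ (k + j + 1) * haR + L * e
    have hfi : L ^ (j - 1) * (L - a ^ (i + j + 1) * R) / (L + p - x * (R + p))
        = L ^ j * (1 - x * w) / (L + p - x * (R + p)) := by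
      rw [hnum_i i, ← hLjj, hx_def]; ring
    have hfi' : L ^ (j - 1) * (L - a ^ (i' + j + 1) * R) / (L + p - x' * (R + p))
        = L ^ j * (1 - x' * w) / (L + p - x' * (R + p)) := by
      rw [hnum_i i', ← hLjj, hx'_def]; ring
    rw [hfi, hfi']
    have hdiffeq : L ^ j * (1 - x * w) / (L + p - x * (R + p))
        - L ^ j * (1 - x' * w) / (L + p - x' * (R + p))
        = L ^ j * ((x - x') * ((R + p) - w * (L + p)))
          / ((L + p - x * (R + p)) * (L + p - x' * (R + p))) := by
      rw [div_sub_div _ _ hDpos.ne' hD'pos.ne']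
      ring
    rw [hdiffeq]
    have hLjpos : (0:ℝ) < L ^ j := zpow_pos hLpos _
    have hDDpos : 0 < (L + p - x * (R + p)) * (L + p - x' * (R + p)) := mul_pos hDpos hD'pos
    have hDuvpos : 0 < (L + p - u * (R + p)) * (L + p - v * (R + p)) := mul_pos hDup hDvp
    rw [abs_div, abs_mul, abs_mul, abs_of_pos hLjpos, abs_of_pos hDDpos]
    -- bound on W
    have hwle : |w| ≤ 1 := by
      have h1 : |w| = b ^ j := by rw [hw_def]; exact habsk j
      have h2 : b ^ j ≤ b ^ (0:ℤ) := hbmono 0 j hj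
      rw [zpow_zero] at h2
      rw [h1]; exact h2
    have hsum : L + R = 1 - p := by rw [hL, hR]; ring
    have hW : |(R + p) - w * (L + p)| ≤ 1 + p := by
      have h1 : |(R + p) - w * (L + p)| ≤ |R + p| + |w * (L + p)| := by
        rw [sub_eq_add_neg]
        refine (abs_add_le _ _).trans ?_
        rw [abs_neg]
      rw [abs_mul, abs_of_pos hRp, abs_of_pos hLppos] at h1
      have h2 : |w| * (L + p) ≤ 1 * (L + p) := mul_le_mul_of_nonneg_right hwle hLppos.le
      linarith only [h1, h2, hsum]
    -- the interval bound on the denominators term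
    have h5 : |1 / (L + p - x * (R + p)) - 1 / (L + p - x' * (R + p))|
        ≤ 1 / (L + p - u * (R + p)) - 1 / (L + p - v * (R + p)) := by
      have a1 : 1 / (L + p - x * (R + p)) ≤ 1 / (L + p - u * (R + p)) :=
        one_div_le_one_div_of_le hDup hDuleD
      have a2 : 1 / (L + p - v * (R + p)) ≤ 1 / (L + p - x * (R + p)) :=
        one_div_le_one_div_of_le hDpos hDleDv
      have a3 : 1 / (L + p - x' * (R + p)) ≤ 1 / (L + p - u * (R + p)) :=
        one_div_le_one_div_of_le hDup hDuleD'
      have a4 : 1 / (L + p - v * (R + p)) ≤ 1 / (L + p - x' * (R + p)) :=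
        one_div_le_one_div_of_le hD'pos hD'leDv
      rw [abs_le]
      exact ⟨by linarith only [a1, a2, a3, a4], by linarith only [a1, a2, a3, a4]⟩
    have e1 : 1 / (L + p - x * (R + p)) - 1 / (L + p - x' * (R + p))
        = (x - x') * (R + p) / ((L + p - x * (R + p)) * (L + p - x' * (R + p))) := by
      rw [div_sub_div _ _ hDpos.ne' hD'pos.ne']
      ring
    have e2 : 1 / (L + p - u * (R + p)) - 1 / (L + p - v * (R + p))
        = (u - v) * (R + p) / ((L + p - u * (R + p)) * (L + p - v * (R + p))) := by
      rw [div_sub_div _ _ hDup.ne' hDvp.ne']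
      ring
    have h5b : |x - x'| * (R + p) / ((L + p - x * (R + p)) * (L + p - x' * (R + p)))
        ≤ (u - v) * (R + p) / ((L + p - u * (R + p)) * (L + p - v * (R + p))) := by
      have e3 : |x - x'| * (R + p) / ((L + p - x * (R + p)) * (L + p - x' * (R + p)))
          = |(x - x') * (R + p) / ((L + p - x * (R + p)) * (L + p - x' * (R + p)))| := by
        rw [abs_div, abs_mul, abs_of_pos hRp, abs_of_pos hDDpos]
      rw [e3, ← e1]
      exact h5.trans (le_of_eq e2)
    have h6 : |x - x'| / ((L + p - x * (R + p)) * (L + p - x' * (R + p)))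
        ≤ (u - v) / ((L + p - u * (R + p)) * (L + p - v * (R + p))) := by
      rw [div_le_div_iff₀ hDDpos hDuvpos] at h5b ⊢
      have h5b' : (|x - x'| * ((L + p - u * (R + p)) * (L + p - v * (R + p)))) * (R + p)
          ≤ ((u - v) * ((L + p - x * (R + p)) * (L + p - x' * (R + p)))) * (R + p) := by
        linarith only [h5b]
      exact le_of_mul_le_mul_right h5b' hRp
    have h1b : (1 + b) * L = s := by
      have hbl : b * L = -R := by rw [hb_eq, haR]; ring
      have hLRs : L - R = s := by rw [hL, hR]; ring
      linear_combination hLRs + hbl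
    -- final assembly
    have hbnn : b ^ (n:ℤ) = b ^ n := zpow_natCast b n
    have hbn1 : b ^ ((n:ℤ) + 1) = b ^ n * b := by
      rw [zpow_add_one₀ (ne_of_gt hb_pos), hbnn]
    have hLj1 : L ^ (j + 1) = L ^ j * L := zpow_add_one₀ hLne j
    have hbnpos : (0:ℝ) < b ^ n := pow_pos hb_pos n
    have key : |(R + p) - w * (L + p)| * ((1 + b) * (1 - p))
        ≤ L * ((L + p - u * (R + p)) * (L + p - v * (R + p))) := by
      have hP : (0:ℝ) < (1 + b) * (1 - p) * L :=
        mul_pos (mul_pos (by linarith only [hb_pos]) (by linarith only [hp1])) hLpos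
      have t1 : |(R + p) - w * (L + p)| * ((1 + b) * (1 - p)) * L
          ≤ (1 + p) * ((1 + b) * (1 - p) * L) := by
        have h := mul_le_mul_of_nonneg_right hW hP.le
        linarith only [h]
      have t2 : (1 + p) * ((1 + b) * (1 - p) * L) = s * (1 - p ^ 2) := by
        linear_combination (1 - p ^ 2) * h1b
      have t3 : s * (1 - p ^ 2) ≤ s * (1 - p ^ 2) * (L + p) := by
        have m3 : 0 ≤ s * (1 - p ^ 2) * ((L + p) - 1) :=
          mul_nonneg (mul_nonneg hs_pos.le hp2.le) (by linarith only [hLp1])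
        linarith only [m3]
      have t4 : s * (1 - p ^ 2) * (L + p)
          ≤ (L * ((L + p - u * (R + p)) * (L + p - v * (R + p)))) * L := by
        have m1 : 0 ≤ ((L + p - u * (R + p)) - (L + p - a ^ 2 * (R + p))) * (L ^ 2) * (L + p) :=
          mul_nonneg (mul_nonneg (sub_nonneg.mpr hDuD0) (sq_nonneg L)) hLppos.le
        have m2 : 0 ≤ (L ^ 2 * (L + p - u * (R + p)))
            * ((L + p - v * (R + p)) - (L + p)) :=
          mul_nonneg (mul_nonneg (sq_nonneg L) hDup.le) (sub_nonneg.mpr hDvge)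
        have I1p : L ^ 2 * (L + p - a ^ 2 * (R + p)) * (L + p) = s * (1 - p ^ 2) * (L + p) := by
          linear_combination (L + p) * I1
        linarith only [I1p, m1, m2]
      have t5 : |(R + p) - w * (L + p)| * ((1 + b) * (1 - p)) * L
          ≤ (L * ((L + p - u * (R + p)) * (L + p - v * (R + p)))) * L := by
        linarith only [t1, t2, t3, t4]
      exact le_of_mul_le_mul_right t5 hLpos
    calc L ^ j * (|x - x'| * |(R + p) - w * (L + p)|)
          / ((L + p - x * (R + p)) * (L + p - x' * (R + p)))
        = (L ^ j * |(R + p) - w * (L + p)|)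
          * (|x - x'| / ((L + p - x * (R + p)) * (L + p - x' * (R + p)))) := by ring
      _ ≤ (L ^ j * |(R + p) - w * (L + p)|)
          * ((u - v) / ((L + p - u * (R + p)) * (L + p - v * (R + p)))) := by
          refine mul_le_mul_of_nonneg_left h6 ?_
          positivity
      _ = (L ^ j * |(R + p) - w * (L + p)| * (u - v))
          / ((L + p - u * (R + p)) * (L + p - v * (R + p))) := by ring
      _ ≤ b ^ n * L ^ (j + 1) / (1 - p) := by
          rw [huv, hbn1, hbnn, hLj1,
            div_le_div_iff₀ hDuvpos (by linarith only [hp1] : (0:ℝ) < 1 - p)]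
          calc L ^ j * |(R + p) - w * (L + p)| * (b ^ n + b ^ n * b) * (1 - p)
              = (L ^ j * b ^ n) * (|(R + p) - w * (L + p)| * ((1 + b) * (1 - p))) := by ring
            _ ≤ (L ^ j * b ^ n)
                * (L * ((L + p - u * (R + p)) * (L + p - v * (R + p)))) := by
                refine mul_le_mul_of_nonneg_left key ?_
                positivity
            _ = b ^ n * (L ^ j * L)
                * ((L + p - u * (R + p)) * (L + p - v * (R + p))) := by ring
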